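/- arXiv:1809.01808 — 4 statements merged into one kernel-verified Lean document; each statement's English description precedes it below -/
import Mathlib

section
/- Let a ∈ (0,1), N ∈ ℕ, and let V : ℝ^{n} → ℝ≥0. Suppose for each k ∈ ℕ there are constants a¹_k,…,a^N_k ∈ (0,1) with Σᵢ aⁱ_k ≥ a, and vectors ωⁱ_k with (ωⁱ_k)ᵀ Wⁱ_k ωⁱ_k ≤ 1 for positive definite matrices Wⁱ_k, such that V(ξ_{k+1}) − a V(ξ_k) − Σᵢ (1 − aⁱ_k)(ωⁱ_k)ᵀ Wⁱ_k ωⁱ_k ≤ 0 for all k. Then V(ξ_k) ≤ a^{k−1} V(ξ₁) + (N − a)(1 − a^{k−1})/(1 − a) for all k ≥ 1. -/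
open Matrix

/-- Dissipation lemma: bound on V along trajectories. -/
theorem stmt_0 {n N : ℕ} {p : Fin N → ℕ}
    (a : ℝ) (ha : a ∈ Set.Ioo (0:ℝ) 1)
    (V : (Fin n → ℝ) → ℝ) (hV : ∀ x, 0 ≤ V x)
    (ξ : ℕ → (Fin n → ℝ))
    (aC : ℕ → Fin N → ℝ)
    (haC : ∀ k i, aC k i ∈ Set.Ioo (0:ℝ) 1)
    (haCsum : ∀ k, a ≤ ∑ i, aC k i)
    (ω : (k : ℕ) → (i : Fin N) → (Fin (p i) → ℝ))
    (W : (k : ℕ) → (i : Fin N) → Matrix (Fin (p i)) (Fin (p i)) ℝ)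
    (hW : ∀ k i, (W k i).PosDef)
    (hω : ∀ k i, ω k i ⬝ᵥ (W k i *ᵥ ω k i) ≤ 1)
    (hdiss : ∀ k, V (ξ (k+1)) - a * V (ξ k)
      - ∑ i, (1 - aC k i) * (ω k i ⬝ᵥ (W k i *ᵥ ω k i)) ≤ 0) :
    ∀ k, 1 ≤ k →
      V (ξ k) ≤ a ^ (k - 1) * V (ξ 1) + ((N : ℝ) - a) * (1 - a ^ (k - 1)) / (1 - a) := by
  obtain ⟨ha0, ha1⟩ := ha
  have h1a : (0:ℝ) < 1 - a := by linarith
  have hstep : ∀ k, V (ξ (k+1)) ≤ a * V (ξ k) + ((N:ℝ) - a) := by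
    intro k
    have hsum : ∑ i, (1 - aC k i) * (ω k i ⬝ᵥ (W k i *ᵥ ω k i)) ≤ (N:ℝ) - a := by
      calc ∑ i, (1 - aC k i) * (ω k i ⬝ᵥ (W k i *ᵥ ω k i))
          ≤ ∑ i : Fin N, (1 - aC k i) := by
            apply Finset.sum_le_sum
            intro i _
            have h1 := (haC k i).2
            nlinarith [hω k i, (haC k i).1]
        _ = (N:ℝ) - ∑ i, aC k i := by
            rw [Finset.sum_sub_distrib]; simp
        _ ≤ (N:ℝ) - a := by linarith [haCsum k]
    linarith [hdiss k]
  intro k hk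
  obtain ⟨m, rfl⟩ := Nat.exists_eq_add_of_le hk
  induction m with
  | zero =>
    simp
  | succ m ih =>
    have h1 : 1 + (m + 1) = (1 + m) + 1 := by ring
    rw [h1]
    have hkm : (1 + m) + 1 - 1 = (1 + m - 1) + 1 := by omega
    rw [hkm]
    have ih' := ih (by omega)
    have hs := hstep (1 + m)
    have hpow : (0:ℝ) ≤ a ^ (1 + m - 1) := by positivity
    have key : V (ξ ((1+m)+1)) ≤ a * (a ^ (1 + m - 1) * V (ξ 1) + ((N:ℝ) - a) * (1 - a ^ (1 + m - 1)) / (1 - a)) + ((N:ℝ) - a) := by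
      nlinarith
    calc V (ξ ((1+m)+1)) ≤ _ := key
      _ = a ^ (1 + m - 1 + 1) * V (ξ 1) + ((N:ℝ) - a) * (1 - a ^ (1 + m - 1 + 1)) / (1 - a) := by
          field_simp
          ring
end

section
/- Consider the linear system ξ_{k+1} = A ξ_k + Σ_{i=1}^{N} Bⁱ ωⁱ_k with disturbances satisfying (ωⁱ_k)ᵀ Wᵢ ωⁱ_k ≤ 1 for positive definite Wᵢ. Suppose there exist a ∈ (0,1), constants a₁,…,a_N ∈ (0,1) with a₁ + ⋯ + a_N ≥ a, and a positive definite matrix P such that the block matrix [[aP, AᵀP, 0],[PA, P, PB],[0, BᵀP, W_a]] is positive semidefinite, where B = [B¹ … B^N] and W_a = diag((1−a₁)W₁,…,(1−a_N)W_N). Then every trajectory satisfies ξ_kᵀ P ξ_k ≤ a^{k−1} ξ₁ᵀ P ξ₁ + (N − a)(1 − a^{k−1})/(1 − a) for all k ≥ 1; in particular the reachable set at time k is contained in the ellipsoid {ξ : ξᵀ P ξ ≤ α_k} with α_k = a^{k−1} ξ₁ᵀ P ξ₁ + (N − a)(1 − a^{k−1})/(1 − a). -/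
/-!
Write `V ξ = ξᵀ P ξ`. Evaluating the quadratic form of the block LMI at `(ξ, -(A ξ + B ω), ω)`
gives the dissipation inequality `V (A ξ + B ω) ≤ a V ξ + ωᵀ W_a ω`, and the peak bounds give
`ωᵀ W_a ω = ∑ᵢ (1 - aᵢ) (ωⁱ)ᵀ Wᵢ ωⁱ ≤ N - ∑ᵢ aᵢ ≤ N - a`. Hence `V ξₖ₊₁ ≤ a V ξₖ + (N - a)`,
and unrolling this affine recursion gives the geometric bound.
-/

open Matrix

namespace Matrix

/-- The block row `[B¹ … Bᴺ]`. -/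
def sigmaCols {ι m α : Type*} {n' : ι → Type*} (B : ∀ i, Matrix m (n' i) α) :
    Matrix m (Σ i, n' i) α :=
  of fun r c => B c.1 r c.2

section Sigma

variable {ι : Type*} [Fintype ι] {m : Type*} {n' : ι → Type*} [∀ i, Fintype (n' i)]

lemma dotProduct_sigma_uncurry {α : Type*} [AddCommMonoid α] [Mul α] (v : (Σ i, n' i) → α)
    (f : ∀ i, n' i → α) :
    v ⬝ᵥ Sigma.uncurry f = ∑ i, (fun j => v ⟨i, j⟩) ⬝ᵥ f i :=
  Fintype.sum_sigma _

lemma sigmaCols_mulVec {α : Type*} [NonUnitalNonAssocSemiring α] (B : ∀ i, Matrix m (n' i) α)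
    (v : (Σ i, n' i) → α) :
    sigmaCols B *ᵥ v = ∑ i, B i *ᵥ (fun j => v ⟨i, j⟩) := by
  ext r
  simp only [mulVec, dotProduct, Finset.sum_apply, Fintype.sum_sigma, sigmaCols, of_apply]

lemma blockDiagonal'_mulVec {α : Type*} [NonUnitalNonAssocSemiring α] [DecidableEq ι]
    (M : ∀ i, Matrix (n' i) (n' i) α) (v : (Σ i, n' i) → α) :
    blockDiagonal' M *ᵥ v = Sigma.uncurry fun i => M i *ᵥ (fun j => v ⟨i, j⟩) := by
  ext ⟨i, j⟩
  simp only [mulVec, dotProduct, Fintype.sum_sigma, Sigma.uncurry]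
  rw [Finset.sum_eq_single i]
  · simp
  · intro i' _ hi'
    simp [blockDiagonal'_apply_ne _ _ _ hi'.symm]
  · simp

lemma dotProduct_blockDiagonal'_mulVec {α : Type*} [NonUnitalNonAssocSemiring α] [DecidableEq ι]
    (M : ∀ i, Matrix (n' i) (n' i) α) (v : (Σ i, n' i) → α) :
    v ⬝ᵥ (blockDiagonal' M *ᵥ v) = ∑ i, (fun j => v ⟨i, j⟩) ⬝ᵥ (M i *ᵥ fun j => v ⟨i, j⟩) := by
  rw [blockDiagonal'_mulVec, dotProduct_sigma_uncurry]

end Sigma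

lemma of_sumElim_zero_eq_fromRows {m₁ m₂ n α : Type*} [Zero α] (M : Matrix m₂ n α) :
    of (fun (i : m₁ ⊕ m₂) j => Sum.elim (fun _ => (0 : α)) (fun i' => M i' j) i) =
      fromRows 0 M := by
  ext (i | i) j <;> rfl

lemma of_sumElim_zero_eq_fromCols {m n₁ n₂ α : Type*} [Zero α] (M : Matrix m n₂ α) :
    of (fun i (j : n₁ ⊕ n₂) => Sum.elim (fun _ => (0 : α)) (fun j' => M i j') j) =
      fromCols 0 M := by
  ext i (j | j) <;> rfl

lemma eq_blockDiagonal'_of_apply {N : ℕ} {p : Fin N → ℕ} {α : Type*} [Mul α] [Zero α]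
    (f : Fin N → α) (W : ∀ i, Matrix (Fin (p i)) (Fin (p i)) α)
    (M : Matrix ((i : Fin N) × Fin (p i)) ((i : Fin N) × Fin (p i)) α)
    (hM : ∀ c c' : (i : Fin N) × Fin (p i), M c c' = if h : c.1 = c'.1 then
      f c.1 * W c.1 c.2 (Fin.cast (congrArg p h).symm c'.2) else 0) :
    M = blockDiagonal' fun i => f i • W i := by
  ext ⟨i, j⟩ ⟨i', j'⟩
  rw [hM, blockDiagonal'_apply']
  dsimp only
  split_ifs with h
  · subst h
    rfl
  · rfl

end Matrix

section Dissipation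

variable {ι : Type*} [Fintype ι]

theorem dotProduct_mulVec_affine_le_of_posSemidef {κ : Type*} [Fintype κ] (A P : Matrix ι ι ℝ)
    (B : Matrix ι κ ℝ) (W : Matrix κ κ ℝ) (a : ℝ)
    (hLMI : (fromBlocks (fromBlocks (a • P) (Aᵀ * P) (P * A) P) (fromRows 0 (P * B))
      (fromCols 0 (Bᵀ * P)) W).PosSemidef) (x : ι → ℝ) (w : κ → ℝ) :
    (A *ᵥ x + B *ᵥ w) ⬝ᵥ (P *ᵥ (A *ᵥ x + B *ᵥ w)) ≤ a * (x ⬝ᵥ (P *ᵥ x)) + w ⬝ᵥ (W *ᵥ w) := by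
  set z := A *ᵥ x + B *ᵥ w
  have h := hLMI.dotProduct_mulVec_nonneg (Sum.elim (Sum.elim x (-z)) w)
  simp only [star_trivial, fromBlocks_mulVec, fromRows_mulVec, fromCols_mulVec, zero_mulVec,
    Sum.elim_comp_inl, Sum.elim_comp_inr, ← Sum.elim_add_add, dotProduct_add,
    sumElim_dotProduct_sumElim, ← mulVec_mulVec, dotProduct_mulVec _ _ (P *ᵥ _), vecMul_transpose,
    mulVec_neg, dotProduct_neg, neg_dotProduct, smul_mulVec, dotProduct_smul, smul_eq_mul,
    dotProduct_zero] at h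
  have hl : A *ᵥ x ⬝ᵥ P *ᵥ z + B *ᵥ w ⬝ᵥ P *ᵥ z = z ⬝ᵥ P *ᵥ z := (add_dotProduct _ _ _).symm
  have hr : z ⬝ᵥ P *ᵥ A *ᵥ x + z ⬝ᵥ P *ᵥ B *ᵥ w = z ⬝ᵥ P *ᵥ z := by
    rw [← dotProduct_add, ← mulVec_add]
  linarith

theorem dotProduct_mulVec_step_le_of_posSemidef {J : Type*} [Fintype J] [DecidableEq J]
    {κ : J → Type*} [∀ i, Fintype (κ i)] (A P : Matrix ι ι ℝ) (B : ∀ i, Matrix ι (κ i) ℝ)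
    (W : ∀ i, Matrix (κ i) (κ i) ℝ) (a : ℝ) (aC : J → ℝ) (haC : ∀ i, aC i ≤ 1)
    (hsum : a ≤ ∑ i, aC i)
    (hLMI : (fromBlocks (fromBlocks (a • P) (Aᵀ * P) (P * A) P) (fromRows 0 (P * sigmaCols B))
      (fromCols 0 ((sigmaCols B)ᵀ * P)) (blockDiagonal' fun i => (1 - aC i) • W i)).PosSemidef)
    (x : ι → ℝ) (ω : ∀ i, κ i → ℝ) (hω : ∀ i, ω i ⬝ᵥ (W i *ᵥ ω i) ≤ 1) :
    (A *ᵥ x + ∑ i, B i *ᵥ ω i) ⬝ᵥ (P *ᵥ (A *ᵥ x + ∑ i, B i *ᵥ ω i))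
      ≤ a * (x ⬝ᵥ (P *ᵥ x)) + (Fintype.card J - a) := by
  have hdist : Sigma.uncurry ω ⬝ᵥ (blockDiagonal' (fun i => (1 - aC i) • W i) *ᵥ Sigma.uncurry ω)
      ≤ Fintype.card J - a := by
    rw [dotProduct_blockDiagonal'_mulVec]
    calc ∑ i, ω i ⬝ᵥ (((1 - aC i) • W i) *ᵥ ω i) = ∑ i, (1 - aC i) * (ω i ⬝ᵥ (W i *ᵥ ω i)) := by
          simp only [smul_mulVec, dotProduct_smul, smul_eq_mul]
      _ ≤ ∑ i, (1 - aC i) :=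
          Finset.sum_le_sum fun i _ => mul_le_of_le_one_right (sub_nonneg.2 (haC i)) (hω i)
      _ ≤ Fintype.card J - a := by
          rw [Finset.sum_sub_distrib, Finset.sum_const, Finset.card_univ, nsmul_one]
          linarith
  have hdiss := dotProduct_mulVec_affine_le_of_posSemidef A P _ _ a hLMI x (Sigma.uncurry ω)
  rw [sigmaCols_mulVec] at hdiss
  exact hdiss.trans (add_le_add_right hdist _)

end Dissipation

lemma le_pow_mul_add_mul_geom_sum {u : ℕ → ℝ} {a c : ℝ} (ha : 0 ≤ a)
    (h : ∀ k, u (k + 1) ≤ a * u k + c) (k₀ : ℕ) :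
    ∀ m, u (k₀ + m) ≤ a ^ m * u k₀ + c * ∑ j ∈ Finset.range m, a ^ j
  | 0 => by simp
  | m + 1 => by
    have ih := le_pow_mul_add_mul_geom_sum ha h k₀ m
    calc u (k₀ + (m + 1)) ≤ a * u (k₀ + m) + c := h _
      _ ≤ a * (a ^ m * u k₀ + c * ∑ j ∈ Finset.range m, a ^ j) + c := by gcongr
      _ = a ^ (m + 1) * u k₀ + c * ∑ j ∈ Finset.range (m + 1), a ^ j := by
        rw [geom_sum_succ]
        ring


theorem stmt_4_general {n N : ℕ} {p : Fin N → ℕ}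
    (A : Matrix (Fin n) (Fin n) ℝ)
    (B : (i : Fin N) → Matrix (Fin n) (Fin (p i)) ℝ)
    (W : (i : Fin N) → Matrix (Fin (p i)) (Fin (p i)) ℝ)
    (ξ : ℕ → (Fin n → ℝ)) (ω : (k : ℕ) → (i : Fin N) → (Fin (p i) → ℝ))
    (hdyn : ∀ k, ξ (k+1) = A *ᵥ ξ k + ∑ i, B i *ᵥ ω k i)
    (hω : ∀ k i, ω k i ⬝ᵥ (W i *ᵥ ω k i) ≤ 1)
    (a : ℝ) (ha : a ∈ Set.Ioo (0:ℝ) 1)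
    (aC : Fin N → ℝ) (haC : ∀ i, aC i ∈ Set.Ioo (0:ℝ) 1) (hsum : a ≤ ∑ i, aC i)
    (P : Matrix (Fin n) (Fin n) ℝ)
    (Bc : Matrix (Fin n) ((i : Fin N) × Fin (p i)) ℝ)
    (hBc : ∀ (r : Fin n) (c : (i : Fin N) × Fin (p i)), Bc r c = B c.1 r c.2)
    (Wa : Matrix ((i : Fin N) × Fin (p i)) ((i : Fin N) × Fin (p i)) ℝ)
    (hWa : ∀ c c' : (i : Fin N) × Fin (p i),
      Wa c c' = if h : c.1 = c'.1 then
        (1 - aC c.1) * W c.1 c.2 (Fin.cast (congrArg p h).symm c'.2) else 0)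
    (hLMI : (Matrix.fromBlocks
        (Matrix.fromBlocks (a • P) (Aᵀ * P) (P * A) P)
        (Matrix.of fun (i : Fin n ⊕ Fin n) (j : (i : Fin N) × Fin (p i)) =>
          Sum.elim (fun _ => (0:ℝ)) (fun i' => (P * Bc) i' j) i)
        (Matrix.of fun (i : (i : Fin N) × Fin (p i)) (j : Fin n ⊕ Fin n) =>
          Sum.elim (fun _ => (0:ℝ)) (fun j' => (Bcᵀ * P) i j') j)
        Wa).PosSemidef) :
    ∀ k, 1 ≤ k →
      ξ k ⬝ᵥ (P *ᵥ ξ k) ≤ a ^ (k - 1) * (ξ 1 ⬝ᵥ (P *ᵥ ξ 1))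
        + ((N : ℝ) - a) * (1 - a ^ (k - 1)) / (1 - a) := by
  intro k hk
  have hBc' : Bc = sigmaCols B := by
    ext r c
    exact hBc r c
  rw [of_sumElim_zero_eq_fromRows, of_sumElim_zero_eq_fromCols, hBc',
    eq_blockDiagonal'_of_apply (fun i => 1 - aC i) W Wa hWa] at hLMI
  have hstep : ∀ k, ξ (k + 1) ⬝ᵥ (P *ᵥ ξ (k + 1)) ≤ a * (ξ k ⬝ᵥ (P *ᵥ ξ k)) + (N - a) := by
    intro k
    simpa only [hdyn k, Fintype.card_fin] using dotProduct_mulVec_step_le_of_posSemidef A P B W a aC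
      (fun i => (haC i).2.le) hsum hLMI (ξ k) (ω k) (hω k)
  obtain ⟨m, rfl⟩ := Nat.exists_eq_add_of_le hk
  calc _ ≤ a ^ m * (ξ 1 ⬝ᵥ (P *ᵥ ξ 1)) + (N - a) * ∑ j ∈ Finset.range m, a ^ j :=
        le_pow_mul_add_mul_geom_sum (u := fun k => ξ k ⬝ᵥ (P *ᵥ ξ k)) ha.1.le hstep 1 m
    _ = _ := by
        rw [geom_sum_eq ha.2.ne, ← neg_div_neg_eq, neg_sub, neg_sub, ← mul_div_assoc,
          Nat.add_sub_cancel_left]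

/-- Ellipsoidal bound on reachable sets of an LTI system driven by peak-bounded
disturbances, certified by the block LMI. -/
theorem stmt_4 {n N : ℕ} {p : Fin N → ℕ}
    (A : Matrix (Fin n) (Fin n) ℝ)
    (B : (i : Fin N) → Matrix (Fin n) (Fin (p i)) ℝ)
    (W : (i : Fin N) → Matrix (Fin (p i)) (Fin (p i)) ℝ)
    (hW : ∀ i, (W i).PosDef)
    (ξ : ℕ → (Fin n → ℝ)) (ω : (k : ℕ) → (i : Fin N) → (Fin (p i) → ℝ))
    (hdyn : ∀ k, ξ (k+1) = A *ᵥ ξ k + ∑ i, B i *ᵥ ω k i)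
    (hω : ∀ k i, ω k i ⬝ᵥ (W i *ᵥ ω k i) ≤ 1)
    (a : ℝ) (ha : a ∈ Set.Ioo (0:ℝ) 1)
    (aC : Fin N → ℝ) (haC : ∀ i, aC i ∈ Set.Ioo (0:ℝ) 1) (hsum : a ≤ ∑ i, aC i)
    (P : Matrix (Fin n) (Fin n) ℝ) (hP : P.PosDef)
    (Bc : Matrix (Fin n) ((i : Fin N) × Fin (p i)) ℝ)
    (hBc : ∀ (r : Fin n) (c : (i : Fin N) × Fin (p i)), Bc r c = B c.1 r c.2)
    (Wa : Matrix ((i : Fin N) × Fin (p i)) ((i : Fin N) × Fin (p i)) ℝ)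
    (hWa : ∀ c c' : (i : Fin N) × Fin (p i),
      Wa c c' = if h : c.1 = c'.1 then
        (1 - aC c.1) * W c.1 c.2 (Fin.cast (congrArg p h).symm c'.2) else 0)
    (hLMI : (Matrix.fromBlocks
        (Matrix.fromBlocks (a • P) (Aᵀ * P) (P * A) P)
        (Matrix.of fun (i : Fin n ⊕ Fin n) (j : (i : Fin N) × Fin (p i)) =>
          Sum.elim (fun _ => (0:ℝ)) (fun i' => (P * Bc) i' j) i)
        (Matrix.of fun (i : (i : Fin N) × Fin (p i)) (j : Fin n ⊕ Fin n) =>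
          Sum.elim (fun _ => (0:ℝ)) (fun j' => (Bcᵀ * P) i j') j)
        Wa).PosSemidef) :
    ∀ k, 1 ≤ k →
      ξ k ⬝ᵥ (P *ᵥ ξ k) ≤ a ^ (k - 1) * (ξ 1 ⬝ᵥ (P *ᵥ ξ 1))
        + ((N : ℝ) - a) * (1 - a ^ (k - 1)) / (1 - a) :=
  stmt_4_general A B W ξ ω hdyn hω a ha aC haC hsum P Bc hBc Wa hWa hLMI
end

section
/- Let Q = [[Q₁, Q₂],[Q₂ᵀ, Q₃]] be a positive definite (n+m)×(n+m) real matrix and α > 0. The orthogonal projection of the ellipsoid {(x,y) ∈ ℝⁿ×ℝᵐ : (x,y)ᵀ Q (x,y) ≤ α} onto the x-coordinate subspace equals the ellipsoid {x ∈ ℝⁿ : xᵀ (Q₁ − Q₂ Q₃⁻¹ Q₂ᵀ) x ≤ α}. -/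
open Matrix

namespace Matrix

variable {m n : Type*}

theorem PosDef.of_fromBlocks₂₂ {R : Type*} [CommRing R] [PartialOrder R] [StarRing R]
    {A : Matrix m m R} {B : Matrix m n R} {C : Matrix n m R} {D : Matrix n n R}
    (h : (fromBlocks A B C D).PosDef) : D.PosDef :=
  h.submatrix Sum.inr_injective

variable [Fintype m] [Fintype n] [DecidableEq n]

/-- Completing the square in `y`. -/
theorem fromBlocks_quadForm_eq (A : Matrix m m ℝ) (B : Matrix m n ℝ) {D : Matrix n n ℝ}
    [Invertible D] (hD : D.IsHermitian) (x : m → ℝ) (y : n → ℝ) :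
    (x ⊕ᵥ y) ⬝ᵥ (fromBlocks A B Bᵀ D *ᵥ (x ⊕ᵥ y)) =
      ((D⁻¹ * Bᵀ) *ᵥ x + y) ⬝ᵥ (D *ᵥ ((D⁻¹ * Bᵀ) *ᵥ x + y)) +
        x ⬝ᵥ ((A - B * D⁻¹ * Bᵀ) *ᵥ x) := by
  simpa [dotProduct_mulVec, conjTranspose_eq_transpose_of_trivial, star_trivial] using
    schur_complement_eq₂₂ A B x y hD

/-- The minimum over `y` is attained at `y = -D⁻¹ Bᵀ x`. -/
theorem exists_fromBlocks_quadForm_le_iff (A : Matrix m m ℝ) (B : Matrix m n ℝ)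
    {D : Matrix n n ℝ} (hD : D.PosDef) (x : m → ℝ) (c : ℝ) :
    (∃ y, (x ⊕ᵥ y) ⬝ᵥ (fromBlocks A B Bᵀ D *ᵥ (x ⊕ᵥ y)) ≤ c) ↔
      x ⬝ᵥ ((A - B * D⁻¹ * Bᵀ) *ᵥ x) ≤ c := by
  have := hD.isUnit.invertible
  simp only [fromBlocks_quadForm_eq A B hD.isHermitian]
  constructor
  · rintro ⟨y, hy⟩
    have hsq := hD.posSemidef.dotProduct_mulVec_nonneg ((D⁻¹ * Bᵀ) *ᵥ x + y)
    rw [star_trivial] at hsq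
    linarith
  · intro hx
    exact ⟨-((D⁻¹ * Bᵀ) *ᵥ x), by simpa using hx⟩

end Matrix

theorem stmt_7_general {n m : ℕ} (Q₁ : Matrix (Fin n) (Fin n) ℝ) (Q₂ : Matrix (Fin n) (Fin m) ℝ)
    (Q₃ : Matrix (Fin m) (Fin m) ℝ)
    (hQ : (Matrix.fromBlocks Q₁ Q₂ Q₂ᵀ Q₃).PosDef) (α : ℝ) :
    {x : Fin n → ℝ | ∃ y : Fin m → ℝ,
        (Sum.elim x y) ⬝ᵥ ((Matrix.fromBlocks Q₁ Q₂ Q₂ᵀ Q₃) *ᵥ (Sum.elim x y)) ≤ α}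
      = {x : Fin n → ℝ | x ⬝ᵥ ((Q₁ - Q₂ * Q₃⁻¹ * Q₂ᵀ) *ᵥ x) ≤ α} :=
  Set.ext fun x => exists_fromBlocks_quadForm_le_iff Q₁ Q₂ hQ.of_fromBlocks₂₂ x α

/-- The projection of an ellipsoid onto the x-coordinate subspace is the ellipsoid of
the Schur complement. -/
theorem stmt_7 {n m : ℕ} (Q₁ : Matrix (Fin n) (Fin n) ℝ) (Q₂ : Matrix (Fin n) (Fin m) ℝ)
    (Q₃ : Matrix (Fin m) (Fin m) ℝ)
    (hQ : (Matrix.fromBlocks Q₁ Q₂ Q₂ᵀ Q₃).PosDef) (α : ℝ) (hα : 0 < α) :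
    {x : Fin n → ℝ | ∃ y : Fin m → ℝ,
        (Sum.elim x y) ⬝ᵥ ((Matrix.fromBlocks Q₁ Q₂ Q₂ᵀ Q₃) *ᵥ (Sum.elim x y)) ≤ α}
      = {x : Fin n → ℝ | x ⬝ᵥ ((Q₁ - Q₂ * Q₃⁻¹ * Q₂ᵀ) *ᵥ x) ≤ α} :=
  stmt_7_general Q₁ Q₂ Q₃ hQ α
end

section
/- S-procedure implication: let C ∈ ℝ^{m×n}, Π, P, W positive semidefinite (with P ∈ ℝ^{n×n} positive definite), and constants α, β > 0. If there exist τ₁, τ₂ ≥ 0 such that the block matrix [[τ₁P − CᵀΠC, −CᵀΠ, 0],[−ΠC, τ₂I_m − Π, 0],[0, 0, 1 − τ₁α − τ₂β]] is positive semidefinite, then for all e ∈ ℝⁿ and η ∈ ℝᵐ with eᵀ P e ≤ α and ηᵀη ≤ β, one has (Ce + η)ᵀ Π (Ce + η) ≤ 1. -/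
/-!
Evaluate the quadratic form of the block matrix at `(e, η, 1)`. Expanding, the cross terms
`-eᵀCᵀΠη - ηᵀΠCe` combine with `-eᵀCᵀΠCe - ηᵀΠη` into `-(Ce + η)ᵀΠ(Ce + η)`, so positive
semidefiniteness reads
`(Ce + η)ᵀΠ(Ce + η) ≤ 1 - τ₁ (α - eᵀPe) - τ₂ (β - ηᵀη)`,
and the two multiplied slacks are nonnegative.
-/

open Matrix

namespace Matrix

variable {l m n R : Type*} [Fintype l] [Fintype m] [Fintype n]

theorem sumElim_dotProduct_fromBlocks_mulVec_sumElim [CommSemiring R]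
    (A : Matrix l l R) (B : Matrix l m R) (C : Matrix m l R) (D : Matrix m m R)
    (x : l → R) (y : m → R) :
    Sum.elim x y ⬝ᵥ (fromBlocks A B C D *ᵥ Sum.elim x y) =
      x ⬝ᵥ A *ᵥ x + x ⬝ᵥ B *ᵥ y + (y ⬝ᵥ C *ᵥ x + y ⬝ᵥ D *ᵥ y) := by
  simp only [fromBlocks_mulVec, Sum.elim_comp_inl, Sum.elim_comp_inr,
    sumElim_dotProduct_sumElim, dotProduct_add]

theorem add_dotProduct_mulVec_add [CommSemiring R] (M : Matrix m m R) (C : Matrix m n R)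
    (e : n → R) (η : m → R) :
    (C *ᵥ e + η) ⬝ᵥ M *ᵥ (C *ᵥ e + η) =
      e ⬝ᵥ (Cᵀ * M * C) *ᵥ e + e ⬝ᵥ (Cᵀ * M) *ᵥ η + (η ⬝ᵥ (M * C) *ᵥ e + η ⬝ᵥ M *ᵥ η) := by
  simp only [← mulVec_mulVec, dotProduct_mulVec e Cᵀ, vecMul_transpose, mulVec_add,
    add_dotProduct, dotProduct_add]
  ring

theorem dotProduct_mulVec_sProcedureCertificate [CommRing R] [DecidableEq m]
    (C : Matrix m n R) (M : Matrix m m R) (P : Matrix n n R) (τ₁ τ₂ c : R)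
    (e : n → R) (η : m → R) :
    Sum.elim (Sum.elim e η) 1 ⬝ᵥ
        (fromBlocks (fromBlocks (τ₁ • P - Cᵀ * M * C) (-(Cᵀ * M)) (-(M * C)) (τ₂ • 1 - M))
          0 0 (of fun (_ : Fin 1) (_ : Fin 1) => c) *ᵥ Sum.elim (Sum.elim e η) 1) =
      τ₁ * (e ⬝ᵥ P *ᵥ e) + τ₂ * (η ⬝ᵥ η) + c - (C *ᵥ e + η) ⬝ᵥ M *ᵥ (C *ᵥ e + η) := by
  have hc : (1 : Fin 1 → R) ⬝ᵥ (of fun (_ : Fin 1) (_ : Fin 1) => c) *ᵥ 1 = c := by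
    simp [dotProduct, mulVec]
  rw [sumElim_dotProduct_fromBlocks_mulVec_sumElim, sumElim_dotProduct_fromBlocks_mulVec_sumElim,
    add_dotProduct_mulVec_add, hc]
  simp only [zero_mulVec, dotProduct_zero, sub_mulVec, smul_mulVec, neg_mulVec, one_mulVec,
    dotProduct_sub, dotProduct_smul, dotProduct_neg, smul_eq_mul]
  ring

end Matrix

theorem stmt_14_general {n m : ℕ} (C : Matrix (Fin m) (Fin n) ℝ)
    (Pm : Matrix (Fin m) (Fin m) ℝ)
    (P : Matrix (Fin n) (Fin n) ℝ)
    (α β : ℝ)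
    (τ₁ τ₂ : ℝ) (hτ₁ : 0 ≤ τ₁) (hτ₂ : 0 ≤ τ₂)
    (h : (Matrix.fromBlocks
        (Matrix.fromBlocks (τ₁ • P - Cᵀ * Pm * C) (-(Cᵀ * Pm)) (-(Pm * C))
          (τ₂ • (1 : Matrix (Fin m) (Fin m) ℝ) - Pm))
        0 0
        (Matrix.of fun (_ : Fin 1) (_ : Fin 1) => 1 - τ₁ * α - τ₂ * β)).PosSemidef) :
    ∀ (e : Fin n → ℝ) (η : Fin m → ℝ), e ⬝ᵥ (P *ᵥ e) ≤ α → η ⬝ᵥ η ≤ β →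
      (C *ᵥ e + η) ⬝ᵥ (Pm *ᵥ (C *ᵥ e + η)) ≤ 1 := by
  intro e η he hη
  have hform := h.dotProduct_mulVec_nonneg (Sum.elim (Sum.elim e η) 1)
  rw [star_trivial, dotProduct_mulVec_sProcedureCertificate] at hform
  have hslack₁ : τ₁ * (e ⬝ᵥ P *ᵥ e) ≤ τ₁ * α := mul_le_mul_of_nonneg_left he hτ₁
  have hslack₂ : τ₂ * (η ⬝ᵥ η) ≤ τ₂ * β := mul_le_mul_of_nonneg_left hη hτ₂
  linarith

/-- S-procedure implication for the monitor design. -/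
theorem stmt_14 {n m : ℕ} (C : Matrix (Fin m) (Fin n) ℝ)
    (Pm : Matrix (Fin m) (Fin m) ℝ) (hPm : Pm.PosSemidef)
    (P : Matrix (Fin n) (Fin n) ℝ) (hP : P.PosDef)
    (α β : ℝ) (hα : 0 < α) (hβ : 0 < β)
    (τ₁ τ₂ : ℝ) (hτ₁ : 0 ≤ τ₁) (hτ₂ : 0 ≤ τ₂)
    (h : (Matrix.fromBlocks
        (Matrix.fromBlocks (τ₁ • P - Cᵀ * Pm * C) (-(Cᵀ * Pm)) (-(Pm * C))
          (τ₂ • (1 : Matrix (Fin m) (Fin m) ℝ) - Pm))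
        0 0
        (Matrix.of fun (_ : Fin 1) (_ : Fin 1) => 1 - τ₁ * α - τ₂ * β)).PosSemidef) :
    ∀ (e : Fin n → ℝ) (η : Fin m → ℝ), e ⬝ᵥ (P *ᵥ e) ≤ α → η ⬝ᵥ η ≤ β →
      (C *ᵥ e + η) ⬝ᵥ (Pm *ᵥ (C *ᵥ e + η)) ≤ 1 :=
  stmt_14_general C Pm P α β τ₁ τ₂ hτ₁ hτ₂ h
end
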